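/- Let λ, ν be nonzero complex constants and let w be a meromorphic function on ℂ satisfying w(z+1) − w(z−1) = (λ·w′(z) + νλ·w(z))/w(z)². Let D ⊆ ℂ be a simply connected domain not containing 0, on which branches of log t and of (−2λν t)^{−1/2} are chosen, and define v(x,t) = (−2λν t)^{−1/2}·w(z) with z = x − (2ν)^{−1}·log t for t ∈ D and x ∈ ℂ. Then, at every point where the relevant values are finite and w is nonzero, v satisfies the differential-difference modified Korteweg–de Vries equation ∂v/∂t (x,t) = v(x,t)²·(v(x+1,t) − v(x−1,t)). -/

import Mathlib

open Filter MeasureTheory Metric Topology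
open scoped Classical

noncomputable section

/-- `a : ℂ → ℂ` is a rational function: away from a finite set it agrees with a
quotient of two polynomials. -/
def IsRat (a : ℂ → ℂ) : Prop :=
  ∃ p q : Polynomial ℂ, q ≠ 0 ∧ ∀ z : ℂ, q.eval z ≠ 0 → a z = p.eval z / q.eval z

/-- `a` is not (identically) the zero rational function. -/
def RatNonzero (a : ℂ → ℂ) : Prop := {z : ℂ | a z ≠ 0}.Infinite

/-- The positive part `log⁺` of the logarithm. -/
def logPlus (x : ℝ) : ℝ := max (Real.log x) 0

/-- The Nevanlinna proximity function `m(r, f)`. -/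
def proxFn (f : ℂ → ℂ) (r : ℝ) : ℝ :=
  (2 * Real.pi)⁻¹ * ∫ θ in (0:ℝ)..(2 * Real.pi),
    logPlus ‖f ((r : ℂ) * Complex.exp ((θ : ℂ) * Complex.I))‖

/-- The order of the pole of `f` at `z` (`0` if there is no pole). -/
def poleOrd (f : ℂ → ℂ) (z : ℂ) : ℕ :=
  if h : MeromorphicAt f z then (-(WithTop.untopD 0 (meromorphicOrderAt f z))).toNat else 0

/-- The order of the zero of `f` at `z` (`0` if there is no zero). -/
def zeroOrd (f : ℂ → ℂ) (z : ℂ) : ℕ :=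
  if h : MeromorphicAt f z then (WithTop.untopD 0 (meromorphicOrderAt f z)).toNat else 0

/-- The unintegrated counting function `n(r, f)` of poles, with multiplicity. -/
def nCount (f : ℂ → ℂ) (r : ℝ) : ℝ :=
  ∑ᶠ z ∈ Metric.closedBall (0:ℂ) r, ((poleOrd f z : ℝ))

/-- The unintegrated counting function `n̄(r, f)` of poles, ignoring multiplicity. -/
def nCountBar (f : ℂ → ℂ) (r : ℝ) : ℝ :=
  ∑ᶠ z ∈ Metric.closedBall (0:ℂ) r, (if 0 < poleOrd f z then (1:ℝ) else 0)

/-- The integrated counting function `N(r, f)` of poles, with multiplicity. -/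
def NCount (f : ℂ → ℂ) (r : ℝ) : ℝ :=
  (∫ t in (0:ℝ)..r, (nCount f t - nCount f 0) / t) + nCount f 0 * Real.log r

/-- The integrated counting function `N̄(r, f)` of poles, ignoring multiplicity. -/
def NCountBar (f : ℂ → ℂ) (r : ℝ) : ℝ :=
  (∫ t in (0:ℝ)..r, (nCountBar f t - nCountBar f 0) / t) + nCountBar f 0 * Real.log r

/-- The Nevanlinna characteristic `T(r, f)`. -/
def Tchar (f : ℂ → ℂ) (r : ℝ) : ℝ := proxFn f r + NCount f r

/-- The order `ρ(f)` of a meromorphic function. -/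
def fnOrder (f : ℂ → ℂ) : EReal :=
  Filter.limsup (fun r : ℝ => ((Real.log (Tchar f r) / Real.log r : ℝ) : EReal)) Filter.atTop

/-- The hyper-order `ρ₂(f)` of a meromorphic function. -/
def hyperOrder (f : ℂ → ℂ) : EReal :=
  Filter.limsup
    (fun r : ℝ => ((Real.log (Real.log (Tchar f r)) / Real.log r : ℝ) : EReal)) Filter.atTop

/-- The hyper-exponent of convergence of the poles of `f`, `λ₂(1/f)`. -/
def hyperPoleExp (f : ℂ → ℂ) : EReal :=
  Filter.limsup
    (fun r : ℝ => ((Real.log (Real.log (nCount f r)) / Real.log r : ℝ) : EReal)) Filter.atTop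

/-- `E ⊆ ℝ` has finite logarithmic measure. -/
def FiniteLogMeasure (E : Set ℝ) : Prop :=
  (∫⁻ t in E ∩ Set.Ioi 1, ENNReal.ofReal (1 / t)) < ⊤

/-- `S` is a small function compared to `T(r, w)`: it is `o(T(r, w))` as `r → ∞`
outside a possible exceptional set of finite logarithmic measure. -/
def IsSmall (S : ℝ → ℝ) (w : ℂ → ℂ) : Prop :=
  ∃ E : Set ℝ, FiniteLogMeasure E ∧
    Filter.Tendsto (fun r => S r / Tchar w r)
      (Filter.atTop ⊓ Filter.principal Eᶜ) (nhds 0)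

/-- Evaluation of a polynomial in `w` with coefficient functions `p i` (rational
functions of `z`) and degree bound `d`, at the point `(z, x)`. -/
def polyEval (p : ℕ → ℂ → ℂ) (d : ℕ) (z x : ℂ) : ℂ :=
  ∑ i ∈ Finset.range (d + 1), p i z * x ^ i

/-- Evaluation of a differential-difference polynomial with finite index set `L`,
coefficients `bc`, and shifts `c`, on the function `g`, at the point `z`. -/
def ddpEval {ν μ : ℕ} (L : Finset (Fin (ν+1) → Fin (μ+1) → ℕ))
    (bc : (Fin (ν+1) → Fin (μ+1) → ℕ) → ℂ → ℂ) (c : Fin (ν+1) → ℂ)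
    (g : ℂ → ℂ) (z : ℂ) : ℂ :=
  ∑ l ∈ L, bc l z *
    ∏ n : Fin (ν+1), ∏ m : Fin (μ+1), (iteratedDeriv (m : ℕ) g (z + c n)) ^ (l n m)

/-- the symmetry reduction of the differential-difference mKdV equation.
If `w` solves `w(z+1) - w(z-1) = (λ w'(z) + νλ w(z))/w(z)²` then, for branches of `log t`
and of `(-2λν t)^{-1/2}` on a simply connected domain `D` not containing `0`, the function
`v(x,t) = (-2λν t)^{-1/2} w(x - (2ν)⁻¹ log t)` satisfies
`v_t(x,t) = v(x,t)² (v(x+1,t) - v(x-1,t))` wherever the relevant values are finite and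
`w` is nonzero. -/
theorem statement12
    (lam nu : ℂ) (hlam : lam ≠ 0) (hnu : nu ≠ 0)
    (w : ℂ → ℂ) (hmero : ∀ z, MeromorphicAt w z)
    (heq : ∀ z : ℂ, AnalyticAt ℂ w z → AnalyticAt ℂ w (z + 1) → AnalyticAt ℂ w (z - 1) →
        w z ≠ 0 →
        w (z + 1) - w (z - 1) = (lam * deriv w z + nu * lam * w z) / (w z) ^ 2)
    (D : Set ℂ) (hDopen : IsOpen D) (hDconn : IsConnected D)
    (hDsc : SimplyConnectedSpace D) (hD0 : (0:ℂ) ∉ D)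
    (Lg : ℂ → ℂ) (hLdiff : DifferentiableOn ℂ Lg D)
    (hLlog : ∀ t ∈ D, Complex.exp (Lg t) = t)
    (s : ℂ → ℂ) (hsdiff : DifferentiableOn ℂ s D)
    (hsval : ∀ t ∈ D, s t ^ 2 * (-2 * lam * nu * t) = 1) :
    ∀ t ∈ D, ∀ x : ℂ,
      AnalyticAt ℂ w (x - (2 * nu)⁻¹ * Lg t) →
      AnalyticAt ℂ w (x - (2 * nu)⁻¹ * Lg t + 1) →
      AnalyticAt ℂ w (x - (2 * nu)⁻¹ * Lg t - 1) →
      w (x - (2 * nu)⁻¹ * Lg t) ≠ 0 →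
      HasDerivAt (fun τ => s τ * w (x - (2 * nu)⁻¹ * Lg τ))
        ((s t * w (x - (2 * nu)⁻¹ * Lg t)) ^ 2 *
          (s t * w (x + 1 - (2 * nu)⁻¹ * Lg t) - s t * w (x - 1 - (2 * nu)⁻¹ * Lg t))) t := by

  intro t ht x hwz hwz1 hwz2 hwne
  set z : ℂ := x - (2 * nu)⁻¹ * Lg t with hz
  have ht0 : t ≠ 0 := fun h => hD0 (h ▸ ht)
  have hs2 : s t ^ 2 * (-2 * lam * nu * t) = 1 := hsval t ht
  have hst : s t ≠ 0 := by
    intro h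
    rw [h] at hs2
    simp at hs2
  -- derivative of Lg
  have hLd : HasDerivAt Lg (deriv Lg t) t :=
    (hLdiff.differentiableAt (hDopen.mem_nhds ht)).hasDerivAt
  have hexp : HasDerivAt (fun τ => Complex.exp (Lg τ)) (Complex.exp (Lg t) * deriv Lg t) t :=
    hLd.cexp
  have hid : HasDerivAt (fun τ => Complex.exp (Lg τ)) 1 t := by
    have hev : (fun τ : ℂ => τ) =ᶠ[nhds t] (fun τ => Complex.exp (Lg τ)) :=
      Filter.eventuallyEq_of_mem (hDopen.mem_nhds ht) (fun τ hτ => (hLlog τ hτ).symm)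
    exact (hasDerivAt_id t).congr_of_eventuallyEq hev.symm
  have hLg' : deriv Lg t = t⁻¹ := by
    have h1 : Complex.exp (Lg t) * deriv Lg t = 1 := hexp.unique hid
    rw [hLlog t ht] at h1
    field_simp
    linear_combination h1
  -- derivative of s
  have hsd : HasDerivAt s (deriv s t) t :=
    (hsdiff.differentiableAt (hDopen.mem_nhds ht)).hasDerivAt
  have hF : HasDerivAt (fun τ => s τ ^ 2 * (-2 * lam * nu * τ))
      (2 * s t ^ 1 * deriv s t * (-2 * lam * nu * t) + s t ^ 2 * (-2 * lam * nu)) t := by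
    have h1 : HasDerivAt (fun τ : ℂ => -2 * lam * nu * τ) (-2 * lam * nu) t := by
      simpa using (hasDerivAt_id t).const_mul (-2 * lam * nu)
    simpa [Pi.mul_def] using ((hsd.pow 2).mul h1)
  have hF0 : HasDerivAt (fun τ => s τ ^ 2 * (-2 * lam * nu * τ)) 0 t := by
    have hev : (fun _ : ℂ => (1:ℂ)) =ᶠ[nhds t] (fun τ => s τ ^ 2 * (-2 * lam * nu * τ)) :=
      Filter.eventuallyEq_of_mem (hDopen.mem_nhds ht) (fun τ hτ => (hsval τ hτ).symm)
    exact (hasDerivAt_const t (1:ℂ)).congr_of_eventuallyEq hev.symm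
  have hE : 2 * s t ^ 1 * deriv s t * (-2 * lam * nu * t) + s t ^ 2 * (-2 * lam * nu) = 0 :=
    hF.unique hF0
  have hs' : deriv s t = -(s t) / (2 * t) := by
    have h4 : (-4 * lam * nu * t * s t) * deriv s t = 2 * lam * nu * s t ^ 2 := by
      linear_combination hE
    rw [eq_div_iff (by simp [ht0] : (2*t : ℂ) ≠ 0)]
    refine mul_left_cancel₀ (a := -2 * lam * nu * s t)
      (by simp [hlam, hnu, hst]) ?_
    linear_combination hE
  -- derivative of inner function
  have hinner : HasDerivAt (fun τ => x - (2 * nu)⁻¹ * Lg τ) (-((2 * nu)⁻¹ * t⁻¹)) t := by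
    have := ((hLg' ▸ hLd).const_mul ((2 * nu)⁻¹)).const_sub x
    simpa using this
  have hwd : HasDerivAt w (deriv w z) z := hwz.differentiableAt.hasDerivAt
  have hcomp : HasDerivAt (fun τ => w (x - (2 * nu)⁻¹ * Lg τ))
      (deriv w z * -((2 * nu)⁻¹ * t⁻¹)) t := hwd.comp t hinner
  have hmain := hsd.mul hcomp
  -- the functional equation at z
  have H : w (z + 1) - w (z - 1) = (lam * deriv w z + nu * lam * w z) / (w z) ^ 2 :=
    heq z hwz hwz1 hwz2 hwne
  have hz1 : x + 1 - (2 * nu)⁻¹ * Lg t = z + 1 := by rw [hz]; ring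
  have hz2 : x - 1 - (2 * nu)⁻¹ * Lg t = z - 1 := by rw [hz]; ring
  rw [hz1, hz2]
  refine HasDerivAt.congr_deriv hmain ?_
  symm
  rw [hs', ← hz]
  have Hc : (w (z + 1) - w (z - 1)) * (w z) ^ 2 = lam * deriv w z + nu * lam * w z := by
    rw [H]
    field_simp
  have e1 : (s t * w z) ^ 2 * (s t * w (z+1) - s t * w (z-1))
      = s t ^ 3 * ((w (z+1) - w (z-1)) * (w z) ^ 2) := by ring
  rw [e1, Hc]
  field_simp
  refine mul_left_cancel₀ hlam ?_
  linear_combination (-(lam * deriv w z + nu * lam * w z)) * hs2
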